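/- arXiv:1705.00303 — 2 statements merged into one kernel-verified Lean document; each statement's English description precedes it below -/
import Mathlib

section
/- Let F = (AR, att) be an argument graph. For every preferred extension of defenses D ∈ PR(DG(F)), the set def(D) is a preferred extension of F, i.e., def(D) ∈ pr(F). -/
open Set

/-- An argument graph (argumentation framework): a finite set of arguments
with an attack relation between arguments of the graph. -/
structure AF (A : Type*) where
  AR : Set A
  att : A → A → Prop
  finite : AR.Finite
  att_mem : ∀ a b, att a b → a ∈ AR ∧ b ∈ AR

namespace AF

variable {A : Type*} (F : AF A)

/-- An argument is initial if no argument attacks it. -/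
def Initial (a : A) : Prop := ∀ b, ¬ F.att b a

/-- A set of arguments is conflict-free. -/
def ConflictFree (E : Set A) : Prop :=
  E ⊆ F.AR ∧ ∀ a ∈ E, ∀ b ∈ E, ¬ F.att a b

/-- α is defended by E: every attacker of α is attacked by E. -/
def Defends (E : Set A) (a : A) : Prop :=
  ∀ b, F.att b a → ∃ c ∈ E, F.att c b

def Admissible (E : Set A) : Prop :=
  F.ConflictFree E ∧ ∀ a ∈ E, F.Defends E a

def Complete (E : Set A) : Prop :=
  F.Admissible E ∧ ∀ a ∈ F.AR, F.Defends E a → a ∈ E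

/-- The set of complete extensions. -/
def co : Set (Set A) := {E | F.Complete E}

/-- The set of grounded extensions (minimal complete extensions). -/
def gr : Set (Set A) := {E | F.Complete E ∧ ∀ E', F.Complete E' → E ⊆ E'}

/-- The set of preferred extensions (maximal complete extensions). -/
def pr : Set (Set A) := {E | F.Complete E ∧ ∀ E', F.Complete E' → E ⊆ E' → E = E'}

/-- The set of stable extensions. -/
def st : Set (Set A) :=
  {E | F.ConflictFree E ∧ ∀ a ∈ F.AR, a ∉ E → ∃ b ∈ E, F.att b a}

/-- The set of defenses of `F`.  A defense is either a pair `⟨some α, β⟩` with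
`{α, β}` conflict-free and some `γ` with `α→γ` and `γ→β`, or a pair
`⟨none, β⟩` with `β` initial (`none` plays the role of `⌀`). -/
def nmd : Set (Option A × A) :=
  {p | (∃ α, p.1 = some α ∧ α ∈ F.AR ∧ p.2 ∈ F.AR ∧
          F.ConflictFree {α, p.2} ∧
          ∃ γ, γ ∈ F.AR ∧ F.att α γ ∧ F.att γ p.2)
     ∨ (p.1 = none ∧ p.2 ∈ F.AR ∧ F.Initial p.2)}

/-- The set of defeaters of defenses (DoDs) of `F`. -/
def und : Set (Option A × A) :=
  {p | (∃ α, p.1 = some α ∧ α ∈ F.AR ∧ p.2 ∈ F.AR ∧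
          ¬ F.ConflictFree {α, p.2} ∧
          ∃ γ, γ ∈ F.AR ∧ γ ≠ α ∧ γ ≠ p.2 ∧ F.att α γ ∧ F.att γ p.2)
     ∨ (p.1 = none ∧ p.2 ∈ F.AR ∧
          (F.att p.2 p.2 ∨ ∃ γ, F.att γ γ ∧ F.att γ p.2))}

/-- Nodes of the defense graph: defenses together with their defeaters. -/
def dgn : Set (Option A × A) := F.nmd ∪ F.und

/-- Lifting of the attack relation to `Option`: conditions mentioning `⌀` are false. -/
def oatt (x y : Option A) : Prop := ∃ a b, x = some a ∧ y = some b ∧ F.att a b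

/-- The attack relation `→d` of the defense graph:
`[x,α] →d [y,β]` iff `x→y`, `x→β`, `α→y` or `α→β`. -/
def dAtt (p q : Option A × A) : Prop :=
  F.oatt p.1 q.1 ∨ F.oatt p.1 (some q.2) ∨ F.oatt (some p.2) q.1 ∨ F.att p.2 q.2

/-- Conflict-freeness of a set of defenses. -/
def DConflictFree (D : Set (Option A × A)) : Prop :=
  D ⊆ F.nmd ∧ ∀ X ∈ D, ∀ Y ∈ D, ¬ F.dAtt X Y

/-- A defense X is defended by D in the defense graph. -/
def DDefends (D : Set (Option A × A)) (X : Option A × A) : Prop :=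
  ∀ Y ∈ F.dgn, F.dAtt Y X → ∃ Z ∈ D, F.dAtt Z Y

def DAdmissible (D : Set (Option A × A)) : Prop :=
  F.DConflictFree D ∧ ∀ X ∈ D, F.DDefends D X

def DComplete (D : Set (Option A × A)) : Prop :=
  F.DAdmissible D ∧ ∀ X ∈ F.nmd, F.DDefends D X → X ∈ D

/-- Complete extensions of defenses of the defense graph DG(F). -/
def CO : Set (Set (Option A × A)) := {D | F.DComplete D}

/-- Grounded extensions of defenses (minimal complete extensions of defenses). -/
def GR : Set (Set (Option A × A)) :=
  {D | F.DComplete D ∧ ∀ D', F.DComplete D' → D ⊆ D'}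

/-- Preferred extensions of defenses (maximal complete extensions of defenses). -/
def PR : Set (Set (Option A × A)) :=
  {D | F.DComplete D ∧ ∀ D', F.DComplete D' → D ⊆ D' → D = D'}

/-- Stable extensions of defenses. -/
def ST : Set (Set (Option A × A)) :=
  {D | F.DConflictFree D ∧ ∀ X ∈ F.dgn, X ∉ D → ∃ Z ∈ D, F.dAtt Z X}

/-- `def(D)`: the defendees and defenders occurring in `D`. -/
def defSet (D : Set (Option A × A)) : Set A :=
  {a | a ∈ F.AR ∧ ((∃ x, (x, a) ∈ D) ∨ (∃ b, ((some a : Option A), b) ∈ D))}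

/-- `d(E) = {⟨x,y⟩ ∈ nmd(F) : x ∈ E ∪ {⌀} and y ∈ E}`. -/
def dE (E : Set A) : Set (Option A × A) :=
  {p | p ∈ F.nmd ∧ (p.1 = none ∨ ∃ a ∈ E, p.1 = some a) ∧ p.2 ∈ E}

/-- The arguments occurring in some defeater of defenses of `F`. -/
def argUnd : Set A :=
  {a | a ∈ F.AR ∧ ((∃ b, ((some a : Option A), b) ∈ F.und) ∨ ∃ x, (x, a) ∈ F.und)}

/-- The c-kernel of `F`. -/
def ck : AF A where
  AR := F.AR
  att a b := F.att a b ∧ ¬(a ≠ b ∧ F.att a a ∧ F.att b b)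
  finite := F.finite
  att_mem a b h := F.att_mem a b h.1

/-- Union of two argument graphs. -/
def union (F G : AF A) : AF A where
  AR := F.AR ∪ G.AR
  att a b := F.att a b ∨ G.att a b
  finite := F.finite.union G.finite
  att_mem a b h := by
    rcases h with h | h
    · exact ⟨Or.inl (F.att_mem a b h).1, Or.inl (F.att_mem a b h).2⟩
    · exact ⟨Or.inr (G.att_mem a b h).1, Or.inr (G.att_mem a b h).2⟩

/-- A set of defenses `D` regarded as a binary relation on `AR ∪ {⌀}`. -/
def dRel (D : Set (Option A × A)) : Option A → Option A → Prop :=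
  fun x y => ∃ b, y = some b ∧ (x, b) ∈ D

/-- The root reason `RR(α, D)` of `α` w.r.t. an extension of defenses `D`,
where `D⁺` is the transitive closure of `D`. -/
def RR (α : A) (D : Set (Option A × A)) : Set (Option A) :=
  {x | (F.Initial α ∧ x = none) ∨
       (¬ F.Initial α ∧ ∃ β, x = some β ∧ β ∈ F.AR ∧
         ((Relation.TransGen (dRel D) (some β) (some β) ∧ β = α) ∨
          (Relation.TransGen (dRel D) (some β) (some α) ∧
            (Relation.TransGen (dRel D) (some β) (some β) ∨ F.Initial β))))}

/-- The set of root reasons for accepting `α` under complete defense semantics. -/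
def rrCO (α : A) : Set (Set (Option A)) :=
  {S | ∃ D ∈ F.CO, S = F.RR α D}

end AF

/-!
A node of DG(F) attacks another iff one of its arguments attacks one of the other's, so `D`
attacks a node iff `def(D)` attacks one of its arguments. This makes `def(D)` conflict-free and,
for complete `D`, complete: to see that `def(D)` defends a member `α` against `β`, one feeds the
nodes `⟨⌀,β⟩`, `⟨σ,β⟩` (`σ → ρ → β`) and `⟨ρ,α⟩` (`ρ → β`), which all lie in DG(F), to the
defences of `D`. Conversely `d(E)` is admissible with `def(d(E)) = E` for admissible `E`, and
`D ⊆ d(def(D))`. So if `D` is preferred and `E ⊇ def(D)` is complete, `d(E)` extends to a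
complete `D' ⊇ D`, whence `D = D' = d(E)` and `E = def(D)`.
-/

namespace AF

variable {A : Type*} {F : AF A} {D : Set (Option A × A)} {E : Set A} {a b : A}

def nodeArgs (p : Option A × A) : Set A := {c | p.1 = some c ∨ c = p.2}

@[simp]
lemma nodeArgs_some (s t : A) : nodeArgs (some s, t) = {s, t} := by
  ext c
  simp [nodeArgs, eq_comm]

lemma nodeArgs_subset_AR {p : Option A × A} (hp : p ∈ F.nmd) : nodeArgs p ⊆ F.AR := by
  rintro c (hc | rfl)
  · obtain ⟨α, hα, hαAR, -⟩ | ⟨hp1, -⟩ := hp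
    · rw [hα, Option.some.injEq] at hc
      exact hc ▸ hαAR
    · rw [hp1] at hc
      cases hc
  · obtain ⟨-, -, -, h, -⟩ | ⟨-, h, -⟩ := hp <;> exact h

lemma dAtt_iff {p q : Option A × A} :
    F.dAtt p q ↔ ∃ y ∈ nodeArgs p, ∃ x ∈ nodeArgs q, F.att y x := by
  constructor
  · rintro (⟨y, x, hy, hx, h⟩ | ⟨y, x, hy, hx, h⟩ | ⟨y, x, hy, hx, h⟩ | h)
    · exact ⟨y, Or.inl hy, x, Or.inl hx, h⟩
    · exact ⟨y, Or.inl hy, x, Or.inr (Option.some.inj hx).symm, h⟩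
    · exact ⟨y, Or.inr (Option.some.inj hy).symm, x, Or.inl hx, h⟩
    · exact ⟨p.2, Or.inr rfl, q.2, Or.inr rfl, h⟩
  · rintro ⟨y, hy | rfl, x, hx | rfl, h⟩
    · exact Or.inl ⟨y, x, hy, hx, h⟩
    · exact Or.inr (Or.inl ⟨y, _, hy, rfl, h⟩)
    · exact Or.inr (Or.inr (Or.inl ⟨_, x, rfl, hx, h⟩))
    · exact Or.inr (Or.inr (Or.inr h))

lemma mem_defSet_iff : a ∈ F.defSet D ↔ a ∈ F.AR ∧ ∃ p ∈ D, a ∈ nodeArgs p := by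
  constructor
  · rintro ⟨ha, ⟨x, hx⟩ | ⟨t, ht⟩⟩
    · exact ⟨ha, _, hx, Or.inr rfl⟩
    · exact ⟨ha, _, ht, Or.inl rfl⟩
  · rintro ⟨ha, ⟨x, t⟩, hp, hx | rfl⟩
    · cases hx
      exact ⟨ha, Or.inr ⟨t, hp⟩⟩
    · exact ⟨ha, Or.inl ⟨x, hp⟩⟩

lemma mem_defSet_of_mem (hD : D ⊆ F.nmd) {p : Option A × A} (hp : p ∈ D)
    (ha : a ∈ nodeArgs p) : a ∈ F.defSet D :=
  mem_defSet_iff.2 ⟨nodeArgs_subset_AR (hD hp) ha, p, hp, ha⟩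

lemma exists_mem_dAtt_iff {Y : Option A × A} :
    (∃ Z ∈ D, F.dAtt Z Y) ↔ ∃ c ∈ F.defSet D, ∃ y ∈ nodeArgs Y, F.att c y := by
  constructor
  · rintro ⟨Z, hZ, hZY⟩
    obtain ⟨c, hc, y, hy, hcy⟩ := dAtt_iff.1 hZY
    exact ⟨c, mem_defSet_iff.2 ⟨(F.att_mem c y hcy).1, Z, hZ, hc⟩, y, hy, hcy⟩
  · rintro ⟨c, hc, y, hy, hcy⟩
    obtain ⟨-, Z, hZ, hcZ⟩ := mem_defSet_iff.1 hc
    exact ⟨Z, hZ, dAtt_iff.2 ⟨c, hcZ, y, hy, hcy⟩⟩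

lemma dDefends_of_defends {W : Option A × A}
    (h : ∀ x ∈ nodeArgs W, F.Defends (F.defSet D) x) : F.DDefends D W := by
  intro Y _ hYW
  obtain ⟨y, hy, x, hx, hyx⟩ := dAtt_iff.1 hYW
  obtain ⟨c, hc, hcy⟩ := h x hx y hyx
  exact exists_mem_dAtt_iff.2 ⟨c, hc, y, hy, hcy⟩

lemma none_mem_dgn (hb : b ∈ F.AR)
    (h : F.Initial b ∨ F.att b b ∨ ∃ γ, F.att γ γ ∧ F.att γ b) : (none, b) ∈ F.dgn := by
  rcases h with h | h
  · exact Or.inl (Or.inr ⟨rfl, hb, h⟩)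
  · exact Or.inr (Or.inr ⟨rfl, hb, h⟩)

lemma some_mem_dgn_of_att_att {s r t : A} (hsr : F.att s r) (hrt : F.att r t)
    (hrs : r ≠ s) (hrt' : r ≠ t) : (some s, t) ∈ F.dgn := by
  have hs := (F.att_mem s r hsr).1
  obtain ⟨hr, ht⟩ := F.att_mem r t hrt
  by_cases hcf : F.ConflictFree {s, t}
  · exact Or.inl (Or.inl ⟨s, rfl, hs, ht, hcf, r, hr, hsr, hrt⟩)
  · exact Or.inr (Or.inl ⟨s, rfl, hs, ht, hcf, r, hr, hrs, hrt', hsr, hrt⟩)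

lemma dAtt_self_of_mem_und {s t : A} (h : (some s, t) ∈ F.und) :
    F.dAtt (some s, t) (some s, t) := by
  obtain ⟨α, hα, hs, ht, hncf, -⟩ | ⟨h, -⟩ := h
  · cases hα
    rw [dAtt_iff, nodeArgs_some]
    by_contra! hcf
    exact hncf ⟨Set.pair_subset hs ht, hcf⟩
  · cases h

lemma ConflictFree.subset {E' : Set A} (hE : F.ConflictFree E) (h : E' ⊆ E) :
    F.ConflictFree E' :=
  ⟨h.trans hE.1, fun x hx y hy => hE.2 x (h hx) y (h hy)⟩

lemma Admissible.conflictFree_insert (hE : F.Admissible E) (ha : a ∈ F.AR)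
    (hdef : F.Defends E a) : F.ConflictFree (insert a E) := by
  have hEa : ∀ c ∈ E, ¬ F.att c a := fun c hc hca => by
    obtain ⟨e, he, hec⟩ := hdef c hca
    exact hE.1.2 e he c hc hec
  have hinsa : ∀ c ∈ insert a E, ¬ F.att c a := by
    rintro c (rfl | hc) hca
    · obtain ⟨e, he, hea⟩ := hdef c hca
      exact hEa e he hea
    · exact hEa c hc hca
  refine ⟨Set.insert_subset ha hE.1.1, fun x hx y hy hxy => ?_⟩
  rcases hy with rfl | hy
  · exact hinsa x hx hxy
  · obtain ⟨e, he, hex⟩ := hE.2 y hy x hxy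
    rcases hx with rfl | hx
    exacts [hEa e he hex, hE.1.2 e he x hx hex]

lemma Admissible.exists_nmd_of_defends (hE : F.Admissible E) (ha : a ∈ F.AR)
    (hdef : F.Defends E a) : ∃ W ∈ F.nmd, W.2 = a ∧ nodeArgs W ⊆ insert a E := by
  by_cases hinit : F.Initial a
  · refine ⟨(none, a), Or.inr ⟨rfl, ha, hinit⟩, rfl, ?_⟩
    rintro c (hc | rfl)
    · cases hc
    · exact Set.mem_insert _ _
  · obtain ⟨γ, hγa⟩ : ∃ γ, F.att γ a := by simpa [Initial] using hinit
    obtain ⟨c, hc, hcγ⟩ := hdef γ hγa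
    have hcf : F.ConflictFree {c, a} :=
      (hE.conflictFree_insert ha hdef).subset (Set.pair_subset (Set.mem_insert_of_mem _ hc)
        (Set.mem_insert _ _))
    refine ⟨(some c, a), Or.inl ⟨c, rfl, hE.1.1 hc, ha, hcf, γ, (F.att_mem γ a hγa).1, hcγ, hγa⟩,
      rfl, ?_⟩
    rw [nodeArgs_some]
    exact Set.pair_subset (Set.mem_insert_of_mem _ hc) (Set.mem_insert _ _)

lemma defSet_conflictFree (hD : F.DConflictFree D) : F.ConflictFree (F.defSet D) := by
  refine ⟨fun a ha => ha.1, fun x hx y hy hxy => ?_⟩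
  obtain ⟨-, X, hX, hxX⟩ := mem_defSet_iff.1 hx
  obtain ⟨-, Y, hY, hyY⟩ := mem_defSet_iff.1 hy
  exact hD.2 X hX Y hY (dAtt_iff.2 ⟨x, hxX, y, hyY, hxy⟩)

lemma DComplete.mem_of_dDefends (hD : F.DComplete D) {s t : A} (hW : (some s, t) ∈ F.dgn)
    (hdef : F.DDefends D (some s, t)) (hfree : ∀ c ∈ F.defSet D, ¬ F.att c s ∧ ¬ F.att c t) :
    (some s, t) ∈ D := by
  -- a DoD with a defender attacks itself, so `D` would attack it
  refine hD.2 _ (((Set.mem_union _ _ _).1 hW).resolve_right fun hund => ?_) hdef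
  obtain ⟨c, hc, x, hx, hcx⟩ := exists_mem_dAtt_iff.1 (hdef _ hW (dAtt_self_of_mem_und hund))
  rw [nodeArgs_some] at hx
  rcases hx with rfl | rfl
  exacts [(hfree c hc).1 hcx, (hfree c hc).2 hcx]

lemma exists_defSet_att_fst (hD : F.DAdmissible D) (ha : a ∈ F.defSet D) (hba : F.att b a)
    (hno : ∀ c ∈ F.defSet D, ¬ F.att c b) {Y : Option A × A} (hY : Y ∈ F.dgn) (hYb : Y.2 = b) :
    ∃ s, Y.1 = some s ∧ ∃ c ∈ F.defSet D, F.att c s := by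
  obtain ⟨-, X, hX, haX⟩ := mem_defSet_iff.1 ha
  obtain ⟨c, hc, y, hy | rfl, hcy⟩ :=
    exists_mem_dAtt_iff.1 (hD.2 X hX Y hY (dAtt_iff.2 ⟨b, Or.inr hYb.symm, a, haX, hba⟩))
  · exact ⟨y, hy, c, hc, hcy⟩
  · exact absurd (hYb ▸ hcy) (hno c hc)

lemma defSet_defends (hD : F.DComplete D) (ha : a ∈ F.defSet D) :
    F.Defends (F.defSet D) a := by
  set E := F.defSet D
  have hcf : F.ConflictFree E := defSet_conflictFree hD.1.1
  intro b hba
  by_contra! hno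
  have hbAR : b ∈ F.AR := (F.att_mem b a hba).1
  have counter : ∀ {Y : Option A × A}, Y ∈ F.dgn → Y.2 = b →
      ∃ s, Y.1 = some s ∧ ∃ c ∈ E, F.att c s :=
    exists_defSet_att_fst hD.1 ha hba hno
  have hnone : (none, b) ∉ F.dgn := fun h => by
    obtain ⟨s, hs, -⟩ := counter h rfl
    cases hs
  have hbb : ¬ F.att b b := fun h => hnone (none_mem_dgn hbAR (Or.inr (Or.inl h)))
  obtain ⟨r, hrb⟩ : ∃ r, F.att r b := by
    by_contra! h
    exact hnone (none_mem_dgn hbAR (Or.inl h))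
  have hrr : ¬ F.att r r := fun h => hnone (none_mem_dgn hbAR (Or.inr (Or.inr ⟨r, h, hrb⟩)))
  have hattackers : ∀ s, F.att s r → ∃ c ∈ E, F.att c s := by
    intro s hsr
    have hY := some_mem_dgn_of_att_att hsr hrb (by rintro rfl; exact hrr hsr)
      (by rintro rfl; exact hbb hrb)
    obtain ⟨s', hs', hE⟩ := counter hY rfl
    cases hs'
    exact hE
  have hrE : ∀ c ∈ E, ¬ F.att c r := fun c hc hcr => by
    obtain ⟨e, he, hec⟩ := hattackers c hcr
    exact hcf.2 e he c hc hec
  have hW : (some r, a) ∈ F.dgn := some_mem_dgn_of_att_att hrb hba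
    (by rintro rfl; exact hbb hrb) (by rintro rfl; exact hcf.2 b ha b ha hba)
  have hWdef : F.DDefends D (some r, a) := by
    intro Y hY hYW
    obtain ⟨y, hy, x, hx, hyx⟩ := dAtt_iff.1 hYW
    rw [nodeArgs_some] at hx
    rcases hx with rfl | rfl
    · obtain ⟨c, hc, hcy⟩ := hattackers y hyx
      exact exists_mem_dAtt_iff.2 ⟨c, hc, y, hy, hcy⟩
    · obtain ⟨-, X, hX, hxX⟩ := mem_defSet_iff.1 ha
      exact hD.1.2 X hX Y hY (dAtt_iff.2 ⟨y, hy, x, hxX, hyx⟩)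
  exact hno r (mem_defSet_of_mem hD.1.1.1
    (hD.mem_of_dDefends hW hWdef fun c hc => ⟨hrE c hc, hcf.2 c hc a ha⟩) (Or.inl rfl)) hrb

lemma defSet_complete (hD : F.DComplete D) : F.Complete (F.defSet D) := by
  have hadm : F.Admissible (F.defSet D) :=
    ⟨defSet_conflictFree hD.1.1, fun a ha => defSet_defends hD ha⟩
  refine ⟨hadm, fun a ha hdef => ?_⟩
  obtain ⟨W, hW, rfl, hWargs⟩ := hadm.exists_nmd_of_defends ha hdef
  have hWD : W ∈ D := hD.2 W hW <| dDefends_of_defends fun x hx => by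
    rcases hWargs hx with rfl | hx
    exacts [hdef, hadm.2 x hx]
  exact mem_defSet_of_mem hD.1.1.1 hWD (Or.inr rfl)

lemma mem_dE_iff {p : Option A × A} : p ∈ F.dE E ↔ p ∈ F.nmd ∧ nodeArgs p ⊆ E := by
  constructor
  · rintro ⟨hp, h1, h2⟩
    refine ⟨hp, ?_⟩
    rintro c (hc | rfl)
    · obtain h1 | ⟨e, he, h1⟩ := h1 <;> rw [h1] at hc <;> cases hc
      exact he
    · exact h2
  · rintro ⟨hp, h⟩
    refine ⟨hp, ?_, h (Or.inr rfl)⟩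
    rcases hx : p.1 with _ | e
    · exact Or.inl rfl
    · exact Or.inr ⟨e, h (Or.inl hx), rfl⟩

lemma dE_mono {E' : Set A} (h : E ⊆ E') : F.dE E ⊆ F.dE E' := fun _ hp =>
  mem_dE_iff.2 ⟨(mem_dE_iff.1 hp).1, (mem_dE_iff.1 hp).2.trans h⟩

lemma subset_dE_defSet (hD : D ⊆ F.nmd) : D ⊆ F.dE (F.defSet D) := fun _ hp =>
  mem_dE_iff.2 ⟨hD hp, fun _ hc => mem_defSet_of_mem hD hp hc⟩

lemma Admissible.defSet_dE (hE : F.Admissible E) : F.defSet (F.dE E) = E := by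
  ext c
  refine ⟨fun hc => ?_, fun hc => ?_⟩
  · obtain ⟨-, p, hp, hcp⟩ := mem_defSet_iff.1 hc
    exact (mem_dE_iff.1 hp).2 hcp
  · obtain ⟨W, hW, rfl, hWargs⟩ := hE.exists_nmd_of_defends (hE.1.1 hc) (hE.2 _ hc)
    rw [Set.insert_eq_of_mem hc] at hWargs
    exact mem_defSet_iff.2 ⟨hE.1.1 hc, W, mem_dE_iff.2 ⟨hW, hWargs⟩, Or.inr rfl⟩

lemma Admissible.dAdmissible_dE (hE : F.Admissible E) : F.DAdmissible (F.dE E) := by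
  refine ⟨⟨fun p hp => hp.1, fun X hX Y hY hXY => ?_⟩, fun X hX Y _ hYX => ?_⟩
  · obtain ⟨x, hx, y, hy, hxy⟩ := dAtt_iff.1 hXY
    exact hE.1.2 x ((mem_dE_iff.1 hX).2 hx) y ((mem_dE_iff.1 hY).2 hy) hxy
  · obtain ⟨y, hy, x, hx, hyx⟩ := dAtt_iff.1 hYX
    obtain ⟨c, hc, hcy⟩ := hE.2 x ((mem_dE_iff.1 hX).2 hx) y hyx
    exact exists_mem_dAtt_iff.2 ⟨c, hE.defSet_dE.symm ▸ hc, y, hy, hcy⟩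

lemma nmd_finite : F.nmd.Finite := by
  refine (((F.finite.image some).insert none).prod F.finite).subset ?_
  rintro ⟨x, β⟩ (⟨α, h1, hα, h2, -⟩ | ⟨h1, h2, -⟩) <;> refine Set.mem_prod.2 ⟨?_, h2⟩ <;>
    simp only at h1 <;> subst h1
  · exact Set.mem_insert_of_mem _ ⟨α, hα, rfl⟩
  · exact Set.mem_insert _ _

lemma DAdmissible.insert {X : Option A × A} (hD : F.DAdmissible D) (hX : X ∈ F.nmd)
    (hdef : F.DDefends D X) : F.DAdmissible (insert X D) := by
  have hXdgn : X ∈ F.dgn := Or.inl hX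
  have hDX : ∀ Z ∈ D, ¬ F.dAtt Z X := fun Z hZ hZX => by
    obtain ⟨Z', hZ', hZ'Z⟩ := hdef Z (Or.inl (hD.1.1 hZ)) hZX
    exact hD.1.2 Z' hZ' Z hZ hZ'Z
  have hXD : ∀ Z ∈ D, ¬ F.dAtt X Z := fun Z hZ hXZ => by
    obtain ⟨Z', hZ', hZ'X⟩ := hD.2 Z hZ X hXdgn hXZ
    exact hDX Z' hZ' hZ'X
  refine ⟨⟨Set.insert_subset hX hD.1.1, ?_⟩, ?_⟩
  · rintro Z (rfl | hZ) W (rfl | hW) hZW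
    · obtain ⟨Z', hZ', hZ'X⟩ := hdef _ hXdgn hZW
      exact hDX Z' hZ' hZ'X
    exacts [hXD _ hW hZW, hDX _ hZ hZW, hD.1.2 _ hZ _ hW hZW]
  · rintro Z (rfl | hZ) Y hY hYZ
    · obtain ⟨Z', h1, h2⟩ := hdef Y hY hYZ
      exact ⟨Z', Set.mem_insert_of_mem _ h1, h2⟩
    · obtain ⟨Z', h1, h2⟩ := hD.2 Z hZ Y hY hYZ
      exact ⟨Z', Set.mem_insert_of_mem _ h1, h2⟩

/-- A maximal admissible superset, which exists as `nmd(F)` is finite, is complete. -/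
lemma DAdmissible.exists_dComplete_superset (hD : F.DAdmissible D) :
    ∃ D', F.DComplete D' ∧ D ⊆ D' := by
  have hfin : {D' | F.DAdmissible D' ∧ D ⊆ D'}.Finite :=
    F.nmd_finite.finite_subsets.subset fun D' hD' => hD'.1.1.1
  obtain ⟨D', ⟨hadm, hsub⟩, hmax⟩ := hfin.exists_maximalFor id _ ⟨D, hD, subset_rfl⟩
  refine ⟨D', ⟨hadm, fun X hX hdef => ?_⟩, hsub⟩
  exact hmax ⟨hadm.insert hX hdef, hsub.trans (Set.subset_insert _ _)⟩
    (Set.subset_insert _ _) (Set.mem_insert _ _)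

end AF

/-- for every preferred extension of defenses `D`,
`def(D)` is a preferred extension of `F`. -/
theorem statement5 {A : Type*} (F : AF A) (D : Set (Option A × A))
    (hD : D ∈ F.PR) : F.defSet D ∈ F.pr := by
  obtain ⟨hDc, hDmax⟩ := hD
  refine ⟨AF.defSet_complete hDc, fun E hE hsub => ?_⟩
  have hDE : D ⊆ F.dE E := (AF.subset_dE_defSet hDc.1.1.1).trans (AF.dE_mono hsub)
  obtain ⟨D', hD'c, hD'⟩ := hE.1.dAdmissible_dE.exists_dComplete_superset
  have hDD' : D = D' := hDmax D' hD'c (hDE.trans hD')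
  have hDeq : D = F.dE E := hDE.antisymm (hDD' ▸ hD')
  rw [hDeq, hE.1.defSet_dE]
end

section
/- Let F = (AR, att) be an argument graph. Then the complete extensions of defenses of the defense graph of F coincide with those of the defense graph of its c-kernel: CO(DG(F)) = CO(DG(F^ck)). -/
open Set

namespace AF

variable {A : Type*} (F : AF A)

lemma dAtt_iff_s13 (p q : Option A × A) :
    F.dAtt p q ↔ ∃ u v, (p.1 = some u ∨ p.2 = u) ∧ (q.1 = some v ∨ q.2 = v) ∧ F.att u v := by
  constructor
  · rintro (⟨a, b, h1, h2, h⟩ | ⟨a, b, h1, h2, h⟩ | ⟨a, b, h1, h2, h⟩ | h)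
    · exact ⟨a, b, Or.inl h1, Or.inl h2, h⟩
    · exact ⟨a, b, Or.inl h1, Or.inr (Option.some_inj.mp h2), h⟩
    · exact ⟨a, b, Or.inr (Option.some_inj.mp h1), Or.inl h2, h⟩
    · exact ⟨p.2, q.2, Or.inr rfl, Or.inr rfl, h⟩
  · rintro ⟨u, v, hu | hu, hv | hv, h⟩
    · exact Or.inl ⟨u, v, hu, hv, h⟩
    · exact Or.inr (Or.inl ⟨u, v, hu, by rw [hv], h⟩)
    · exact Or.inr (Or.inr (Or.inl ⟨u, v, by rw [hu], hv, h⟩))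
    · exact Or.inr (Or.inr (Or.inr (by rw [hu, hv]; exact h)))

lemma nmd_comp_mem {p : Option A × A} {u : A} (hp : p ∈ F.nmd)
    (h : p.1 = some u ∨ p.2 = u) : u ∈ F.AR := by
  rcases hp with ⟨α, h1, hα, h2, _, _⟩ | ⟨h1, h2, _⟩
  · rcases h with h | h
    · rw [h1] at h
      exact (Option.some_inj.mp h) ▸ hα
    · exact h ▸ h2
  · rcases h with h | h
    · rw [h1] at h; simp at h
    · exact h ▸ h2

lemma conflictFree_pair {E : Set A} (h : F.ConflictFree E) {u v : A}
    (hu : u ∈ E) (hv : v ∈ E) : F.ConflictFree {u, v} := by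
  constructor
  · intro x hx
    simp only [Set.mem_insert_iff, Set.mem_singleton_iff] at hx
    rcases hx with rfl | rfl
    exacts [h.1 hu, h.1 hv]
  · intro x hx y hy
    simp only [Set.mem_insert_iff, Set.mem_singleton_iff] at hx hy
    rcases hx with rfl | rfl <;> rcases hy with rfl | rfl
    · exact h.2 _ hu _ hu
    · exact h.2 _ hu _ hv
    · exact h.2 _ hv _ hu
    · exact h.2 _ hv _ hv

/-- Direction 1 of the characterization: if `E` is a complete extension of `F`,
then `d(E)` is a complete extension of defenses of the defense graph of `F`. -/
lemma dE_mem_CO {E : Set A} (hE : F.Complete E) : F.dE E ∈ F.CO := by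
  obtain ⟨⟨hcfE, hEdef⟩, hEcomp⟩ := hE
  have hEAR : E ⊆ F.AR := hcfE.1
  have hEcf : ∀ u ∈ E, ∀ v ∈ E, ¬ F.att u v := hcfE.2
  have compE : ∀ p ∈ F.dE E, ∀ u, (p.1 = some u ∨ p.2 = u) → u ∈ E := by
    rintro p ⟨hnmd, hmid, h2⟩ u hu
    rcases hu with hu | hu
    · rcases hmid with hm | ⟨a, haE, ha⟩
      · rw [hm] at hu; simp at hu
      · rw [ha] at hu
        exact (Option.some_inj.mp hu) ▸ haE
    · exact hu ▸ h2
  have counterNode : ∀ z ∈ E, ∃ Z ∈ F.dE E, Z.2 = z := by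
    intro z hz
    by_cases hzI : F.Initial z
    · exact ⟨(none, z), ⟨Or.inr ⟨rfl, hEAR hz, hzI⟩, Or.inl rfl, hz⟩, rfl⟩
    · have hex : ∃ b, F.att b z := by
        simp only [Initial, not_forall, not_not] at hzI; exact hzI
      obtain ⟨b, hb⟩ := hex
      obtain ⟨c, hcE, hcb⟩ := hEdef z hz b hb
      exact ⟨(some c, z),
        ⟨Or.inl ⟨c, rfl, hEAR hcE, hEAR hz, F.conflictFree_pair hcfE hcE hz,
          b, (F.att_mem b z hb).1, hcb, hb⟩, Or.inr ⟨c, hcE, rfl⟩, hz⟩, rfl⟩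
  have hdefX : ∀ X ∈ F.dE E, F.DDefends (F.dE E) X := by
    intro X hX Y hY hatt
    obtain ⟨u, v, hu, hv, h⟩ := (F.dAtt_iff_s13 Y X).mp hatt
    have hvE := compE X hX v hv
    obtain ⟨z, hzE, hzu⟩ := hEdef v hvE u h
    obtain ⟨Z, hZ, hZ2⟩ := counterNode z hzE
    exact ⟨Z, hZ, (F.dAtt_iff_s13 Z Y).mpr ⟨z, u, Or.inr hZ2, hu, hzu⟩⟩
  refine ⟨⟨⟨fun p hp => hp.1, ?_⟩, hdefX⟩, ?_⟩
  · intro X hX Y hY hatt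
    obtain ⟨u, v, hu, hv, h⟩ := (F.dAtt_iff_s13 X Y).mp hatt
    exact hEcf u (compE X hX u hu) v (compE Y hY v hv) h
  · intro X hXnmd hXd
    have hDefc : ∀ c, (X.1 = some c ∨ X.2 = c) → F.Defends E c := by
      intro c hc b hbc
      have hbAR : b ∈ F.AR := (F.att_mem b c hbc).1
      by_cases h0 : F.Initial b ∨ (F.att b b ∨ ∃ s, F.att s s ∧ F.att s b)
      · have hbdgn : ((none : Option A), b) ∈ F.dgn := by
          rcases h0 with h0 | h0
          · exact Or.inl (Or.inr ⟨rfl, hbAR, h0⟩)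
          · exact Or.inr (Or.inr ⟨rfl, hbAR, h0⟩)
        obtain ⟨Z, hZ, hZatt⟩ := hXd (none, b) hbdgn
          ((F.dAtt_iff_s13 _ X).mpr ⟨b, c, Or.inr rfl, hc, hbc⟩)
        obtain ⟨u, v, hu, hv, h⟩ := (F.dAtt_iff_s13 Z _).mp hZatt
        have hvb : v = b := by
          rcases hv with hv | hv
          · exact absurd hv (by simp)
          · exact hv.symm
        exact ⟨u, compE Z hZ u hu, hvb ▸ h⟩
      · have hnsb : ¬ F.att b b := fun h => h0 (Or.inr (Or.inl h))
        have hnse : ∀ s, F.att s s → ¬ F.att s b := fun s h1 h2 => h0 (Or.inr (Or.inr ⟨s, h1, h2⟩))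
        have hnI : ¬ F.Initial b := fun h => h0 (Or.inl h)
        have hex : ∃ e, F.att e b := by
          simp only [Initial, not_forall, not_not] at hnI; exact hnI
        obtain ⟨e, he⟩ := hex
        by_cases heE : e ∈ E
        · exact ⟨e, heE, he⟩
        · have hnd : ¬ F.Defends E e := fun hd => heE (hEcomp e (F.att_mem e b he).1 hd)
          have hexw : ∃ w, F.att w e ∧ ∀ z ∈ E, ¬ F.att z w := by
            unfold Defends at hnd; push_neg at hnd; exact hnd
          obtain ⟨w, hwe, hwz⟩ := hexw
          have hew : e ≠ w := fun h => hnse w (h ▸ hwe) (h ▸ he)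
          have heb : e ≠ b := fun h => hnsb (h ▸ he)
          have hWdgn : ((some w : Option A), b) ∈ F.dgn := by
            by_cases hcfwb : F.ConflictFree {w, b}
            · exact Or.inl (Or.inl ⟨w, rfl, (F.att_mem w e hwe).1, hbAR, hcfwb,
                e, (F.att_mem e b he).1, hwe, he⟩)
            · exact Or.inr (Or.inl ⟨w, rfl, (F.att_mem w e hwe).1, hbAR, hcfwb,
                e, (F.att_mem e b he).1, hew, heb, hwe, he⟩)
          obtain ⟨Z, hZ, hZatt⟩ := hXd (some w, b) hWdgn
            ((F.dAtt_iff_s13 _ X).mpr ⟨b, c, Or.inr rfl, hc, hbc⟩)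
          obtain ⟨u, v, hu, hv, h⟩ := (F.dAtt_iff_s13 Z _).mp hZatt
          have huE := compE Z hZ u hu
          rcases hv with hv | hv
          · obtain rfl : w = v := Option.some_inj.mp hv
            exact absurd h (hwz u huE)
          · exact ⟨u, huE, (show v = b from hv.symm) ▸ h⟩
    have hXnmd' := hXnmd
    rcases hXnmd' with ⟨α, h1, hα, h2, _, _⟩ | ⟨h1, h2, hinit⟩
    · have hαE := hEcomp α hα (hDefc α (Or.inl h1))
      have h2E := hEcomp X.2 h2 (hDefc X.2 (Or.inr rfl))
      exact ⟨hXnmd, Or.inr ⟨α, hαE, h1⟩, h2E⟩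
    · have h2E := hEcomp X.2 h2 (hDefc X.2 (Or.inr rfl))
      exact ⟨hXnmd, Or.inl h1, h2E⟩

/-- Direction 2 of the characterization: every complete extension of defenses
is of the form `d(E)` for some complete extension `E`. -/
lemma CO_eq_dE {D : Set (Option A × A)} (hD : F.DComplete D) :
    ∃ E, F.Complete E ∧ D = F.dE E := by
  obtain ⟨⟨⟨hsub, hDcf⟩, hDadm⟩, hDcomp⟩ := hD
  set E : Set A := {a | ∃ P ∈ D, P.1 = some a ∨ P.2 = a} with hEset
  have hEAR : E ⊆ F.AR := by
    rintro a ⟨P, hP, hPc⟩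
    exact F.nmd_comp_mem (hsub hP) hPc
  have hEcf : ∀ u ∈ E, ∀ v ∈ E, ¬ F.att u v := by
    rintro u ⟨P, hP, hPc⟩ v ⟨Q, hQ, hQc⟩ h
    exact hDcf P hP Q hQ ((F.dAtt_iff_s13 P Q).mpr ⟨u, v, hPc, hQc, h⟩)
  have hnoSelf : ∀ u ∈ E, ¬ F.att u u := fun u hu => hEcf u hu u hu
  have hb : ∀ a ∈ E, ∀ b, F.att b a → ∃ z ∈ E, F.att z b := by
    rintro a ⟨P, hP, hPc⟩ b hba
    by_contra hstar
    push_neg at hstar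
    have hbAR : b ∈ F.AR := (F.att_mem b a hba).1
    have attP : ∀ Y : Option A × A, (Y.1 = some b ∨ Y.2 = b) → F.dAtt Y P :=
      fun Y hY => (F.dAtt_iff_s13 Y P).mpr ⟨b, a, hY, hPc, hba⟩
    have getE : ∀ Y ∈ F.dgn, F.dAtt Y P →
        ∃ u ∈ E, ∃ v, (Y.1 = some v ∨ Y.2 = v) ∧ F.att u v := by
      intro Y hY hYatt
      obtain ⟨Z, hZ, hZatt⟩ := hDadm P hP Y hY hYatt
      obtain ⟨u, v, hu, hv, h⟩ := (F.dAtt_iff_s13 Z Y).mp hZatt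
      exact ⟨u, ⟨Z, hZ, hu⟩, v, hv, h⟩
    by_cases h0 : F.Initial b ∨ (F.att b b ∨ ∃ s, F.att s s ∧ F.att s b)
    · have hdgn : ((none : Option A), b) ∈ F.dgn := by
        rcases h0 with h0 | h0
        · exact Or.inl (Or.inr ⟨rfl, hbAR, h0⟩)
        · exact Or.inr (Or.inr ⟨rfl, hbAR, h0⟩)
      obtain ⟨u, huE, v, hv, h⟩ := getE _ hdgn (attP _ (Or.inr rfl))
      have hvb : v = b := by
        rcases hv with hv | hv
        · exact absurd hv (by simp)
        · exact hv.symm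
      exact hstar u huE (hvb ▸ h)
    · have hnsb : ¬ F.att b b := fun h => h0 (Or.inr (Or.inl h))
      have hnse : ∀ s, F.att s s → ¬ F.att s b := fun s h1 h2 => h0 (Or.inr (Or.inr ⟨s, h1, h2⟩))
      have hnI : ¬ F.Initial b := fun h => h0 (Or.inl h)
      have hex : ∃ e, F.att e b := by
        simp only [Initial, not_forall, not_not] at hnI; exact hnI
      have hA : ∀ e', F.att e' b → ∀ z ∈ E, ¬ F.att z e' := by
        intro e' he' z hzE hze'
        have hne'z : e' ≠ z := fun h => hnoSelf z hzE (h ▸ hze')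
        have hne'b : e' ≠ b := fun h => hnsb (h ▸ he')
        have hdgn : ((some z : Option A), b) ∈ F.dgn := by
          by_cases hcf : F.ConflictFree {z, b}
          · exact Or.inl (Or.inl ⟨z, rfl, hEAR hzE, hbAR, hcf,
              e', (F.att_mem e' b he').1, hze', he'⟩)
          · exact Or.inr (Or.inl ⟨z, rfl, hEAR hzE, hbAR, hcf,
              e', (F.att_mem e' b he').1, hne'z, hne'b, hze', he'⟩)
        obtain ⟨u, huE, v, hv, h⟩ := getE _ hdgn (attP _ (Or.inr rfl))
        rcases hv with hv | hv
        · obtain rfl : z = v := Option.some_inj.mp hv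
          exact hEcf u huE z hzE h
        · exact hstar u huE ((show v = b from hv.symm) ▸ h)
      obtain ⟨e, he⟩ := hex
      have heAR := (F.att_mem e b he).1
      have hneb : e ≠ b := fun h => hnsb (h ▸ he)
      have hB : ∀ w, F.att w e → ∃ z ∈ E, F.att z w := by
        intro w hw
        have hnew : e ≠ w := fun h => hnse w (h ▸ hw) (h ▸ he)
        have hdgn : ((some w : Option A), b) ∈ F.dgn := by
          by_cases hcf : F.ConflictFree {w, b}
          · exact Or.inl (Or.inl ⟨w, rfl, (F.att_mem w e hw).1, hbAR, hcf, e, heAR, hw, he⟩)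
          · exact Or.inr (Or.inl ⟨w, rfl, (F.att_mem w e hw).1, hbAR, hcf,
              e, heAR, hnew, hneb, hw, he⟩)
        obtain ⟨u, huE, v, hv, h⟩ := getE _ hdgn (attP _ (Or.inr rfl))
        rcases hv with hv | hv
        · obtain rfl : w = v := Option.some_inj.mp hv
          exact ⟨u, huE, h⟩
        · exact absurd ((show v = b from hv.symm) ▸ h) (hstar u huE)
      by_cases hIe : F.Initial e
      · have hq : ((none : Option A), e) ∈ F.nmd := Or.inr ⟨rfl, heAR, hIe⟩
        have hqd : F.DDefends D (none, e) := by
          intro Y hY hatt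
          obtain ⟨u, v, hu, hv, h⟩ := (F.dAtt_iff_s13 Y _).mp hatt
          have hve : v = e := by
            rcases hv with hv | hv
            · exact absurd hv (by simp)
            · exact hv.symm
          exact absurd (hve ▸ h) (hIe u)
        exact hstar e ⟨_, hDcomp _ hq hqd, Or.inr rfl⟩ he
      · have hexw : ∃ w, F.att w e := by
          simp only [Initial, not_forall, not_not] at hIe; exact hIe
        obtain ⟨w, hw⟩ := hexw
        obtain ⟨zw, hzwE, hzww⟩ := hB w hw
        have hnzwe : ¬ F.att zw e := hA e he zw hzwE
        have hzwAR := hEAR hzwE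
        have hnew : e ≠ w := fun h => hnse w (h ▸ hw) (h ▸ he)
        have hnwzw : w ≠ zw := fun h => hnoSelf zw hzwE (h ▸ hzww)
        obtain ⟨Zw, hZw, hZwc⟩ := hzwE
        have hzwE' : zw ∈ E := ⟨Zw, hZw, hZwc⟩
        by_cases hezw : F.att e zw
        · have hncf : ¬ F.ConflictFree {zw, e} := fun hcf =>
            hcf.2 e (by simp) zw (by simp) hezw
          have hdgn : ((some zw : Option A), e) ∈ F.dgn :=
            Or.inr (Or.inl ⟨zw, rfl, hzwAR, heAR, hncf,
              w, (F.att_mem w e hw).1, hnwzw, hnew.symm, hzww, hw⟩)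
          have hatt : F.dAtt (some zw, e) Zw :=
            (F.dAtt_iff_s13 _ _).mpr ⟨e, zw, Or.inr rfl, hZwc, hezw⟩
          obtain ⟨Z, hZ, hZatt⟩ := hDadm Zw hZw _ hdgn hatt
          obtain ⟨u, v, hu, hv, h⟩ := (F.dAtt_iff_s13 Z _).mp hZatt
          have huE : u ∈ E := ⟨Z, hZ, hu⟩
          rcases hv with hv | hv
          · obtain rfl : zw = v := Option.some_inj.mp hv
            exact hEcf u huE zw hzwE' h
          · exact hA e he u huE ((show v = e from hv.symm) ▸ h)
        · have hcf : F.ConflictFree {zw, e} := by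
            constructor
            · intro x hx
              simp only [Set.mem_insert_iff, Set.mem_singleton_iff] at hx
              rcases hx with rfl | rfl
              exacts [hzwAR, heAR]
            · intro x hx y hy
              simp only [Set.mem_insert_iff, Set.mem_singleton_iff] at hx hy
              rcases hx with rfl | rfl <;> rcases hy with rfl | rfl
              · exact hnoSelf _ hzwE'
              · exact hnzwe
              · exact hezw
              · exact fun h' => hnse _ h' he
          have hq : ((some zw : Option A), e) ∈ F.nmd :=
            Or.inl ⟨zw, rfl, hzwAR, heAR, hcf, w, (F.att_mem w e hw).1, hzww, hw⟩
          have hqd : F.DDefends D (some zw, e) := by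
            intro Y hY hatt
            obtain ⟨u, v, hu, hv, h⟩ := (F.dAtt_iff_s13 Y _).mp hatt
            rcases hv with hv | hv
            · obtain rfl : zw = v := Option.some_inj.mp hv
              exact hDadm Zw hZw Y hY ((F.dAtt_iff_s13 Y Zw).mpr ⟨u, zw, hu, hZwc, h⟩)
            · obtain ⟨z', hz'E, hz'u⟩ := hB u ((show v = e from hv.symm) ▸ h)
              obtain ⟨Z', hZ', hZ'c⟩ := hz'E
              exact ⟨Z', hZ', (F.dAtt_iff_s13 Z' Y).mpr ⟨z', u, hZ'c, hu, hz'u⟩⟩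
          exact hstar e ⟨_, hDcomp _ hq hqd, Or.inr rfl⟩ he
  have hc : ∀ a ∈ F.AR, F.Defends E a → a ∈ E := by
    intro a haAR hd
    have hnoatk : ∀ z ∈ E, ¬ F.att z a := by
      intro z hz hza
      obtain ⟨z', hz'E, hz'z⟩ := hd z hza
      exact hEcf z' hz'E z hz hz'z
    have hnsa : ¬ F.att a a := fun h => by
      obtain ⟨c, hcE, hca⟩ := hd a h
      exact hnoatk c hcE hca
    by_cases hIa : F.Initial a
    · have hq : ((none : Option A), a) ∈ F.nmd := Or.inr ⟨rfl, haAR, hIa⟩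
      have hqd : F.DDefends D (none, a) := by
        intro Y hY hatt
        obtain ⟨u, v, hu, hv, h⟩ := (F.dAtt_iff_s13 Y _).mp hatt
        have hva : v = a := by
          rcases hv with hv | hv
          · exact absurd hv (by simp)
          · exact hv.symm
        exact absurd (hva ▸ h) (hIa u)
      exact ⟨_, hDcomp _ hq hqd, Or.inr rfl⟩
    · have hex : ∃ b, F.att b a := by
        simp only [Initial, not_forall, not_not] at hIa; exact hIa
      obtain ⟨b, hba⟩ := hex
      obtain ⟨zb, hzbE, hzbb⟩ := hd b hba
      have hnazb : ¬ F.att a zb := by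
        intro h
        obtain ⟨z', hz'E, hz'a⟩ := hb zb hzbE a h
        exact hnoatk z' hz'E hz'a
      obtain ⟨Zb, hZb, hZbc⟩ := id hzbE
      have hcf : F.ConflictFree {zb, a} := by
        constructor
        · intro x hx
          simp only [Set.mem_insert_iff, Set.mem_singleton_iff] at hx
          rcases hx with rfl | rfl
          exacts [hEAR hzbE, haAR]
        · intro x hx y hy
          simp only [Set.mem_insert_iff, Set.mem_singleton_iff] at hx hy
          rcases hx with rfl | rfl <;> rcases hy with rfl | rfl
          · exact hnoSelf _ hzbE
          · exact hnoatk _ hzbE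
          · exact hnazb
          · exact hnsa
      have hq : ((some zb : Option A), a) ∈ F.nmd :=
        Or.inl ⟨zb, rfl, hEAR hzbE, haAR, hcf, b, (F.att_mem b a hba).1, hzbb, hba⟩
      have hqd : F.DDefends D (some zb, a) := by
        intro Y hY hatt
        obtain ⟨u, v, hu, hv, h⟩ := (F.dAtt_iff_s13 Y _).mp hatt
        rcases hv with hv | hv
        · obtain rfl : zb = v := Option.some_inj.mp hv
          exact hDadm Zb hZb Y hY ((F.dAtt_iff_s13 Y Zb).mpr ⟨u, zb, hu, hZbc, h⟩)
        · obtain ⟨z'', hz''E, hz''u⟩ := hd u ((show v = a from hv.symm) ▸ h)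
          obtain ⟨Z'', hZ'', hZ''c⟩ := hz''E
          exact ⟨Z'', hZ'', (F.dAtt_iff_s13 Z'' Y).mpr ⟨z'', u, hZ''c, hu, hz''u⟩⟩
      exact ⟨_, hDcomp _ hq hqd, Or.inr rfl⟩
  refine ⟨E, ⟨⟨⟨hEAR, hEcf⟩, fun a ha => hb a ha⟩, hc⟩, ?_⟩
  ext p
  constructor
  · intro hp
    refine ⟨hsub hp, ?_, ⟨p, hp, Or.inr rfl⟩⟩
    cases hp1 : p.1 with
    | none => exact Or.inl rfl
    | some a => exact Or.inr ⟨a, ⟨p, hp, Or.inl hp1⟩, rfl⟩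
  · rintro ⟨hnmd, hmid, h2E⟩
    apply hDcomp p hnmd
    intro Y hY hatt
    obtain ⟨u, v, hu, hv, h⟩ := (F.dAtt_iff_s13 Y p).mp hatt
    have hvE : v ∈ E := by
      rcases hv with hv | hv
      · rcases hmid with hm | ⟨a, haE, ha⟩
        · rw [hm] at hv; simp at hv
        · rw [ha] at hv
          exact (Option.some_inj.mp hv) ▸ haE
      · exact hv ▸ h2E
    obtain ⟨P, hP, hPc⟩ := hvE
    exact hDadm P hP Y hY ((F.dAtt_iff_s13 Y P).mpr ⟨u, v, hu, hPc, h⟩)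

lemma ck_att_iff (a b : A) :
    F.ck.att a b ↔ (F.att a b ∧ ¬(a ≠ b ∧ F.att a a ∧ F.att b b)) := Iff.rfl

lemma ck_att_self_iff (a : A) : F.ck.att a a ↔ F.att a a := by
  rw [ck_att_iff]; simp

lemma ck_att_of_target {a b : A} (h : F.att a b) (hb : ¬ F.att b b) : F.ck.att a b :=
  (F.ck_att_iff a b).mpr ⟨h, fun hc => hb hc.2.2⟩

lemma ck_att_of_source {a b : A} (h : F.att a b) (ha : ¬ F.att a a) : F.ck.att a b :=
  (F.ck_att_iff a b).mpr ⟨h, fun hc => ha hc.2.1⟩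

lemma ck_conflictFree_iff (S : Set A) : F.ck.ConflictFree S ↔ F.ConflictFree S := by
  constructor
  · rintro ⟨h1, h2⟩
    refine ⟨h1, fun a ha b hb hab => ?_⟩
    by_cases hk : F.ck.att a b
    · exact h2 a ha b hb hk
    · have hcon : F.att a a := by
        rw [ck_att_iff] at hk
        by_contra hna
        exact hk ⟨hab, fun hc => hna hc.2.1⟩
      exact h2 a ha a ha ((F.ck_att_self_iff a).mpr hcon)
  · rintro ⟨h1, h2⟩
    exact ⟨h1, fun a ha b hb hab => h2 a ha b hb ((F.ck_att_iff a b).mp hab).1⟩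

lemma ck_initial_iff (a : A) : F.ck.Initial a ↔ F.Initial a := by
  constructor
  · intro h b hba
    by_cases hsa : F.att a a
    · exact h a ((F.ck_att_self_iff a).mpr hsa)
    · exact h b (F.ck_att_of_target hba hsa)
  · intro h b hba
    exact h b ((F.ck_att_iff b a).mp hba).1

lemma ck_nmd : F.ck.nmd = F.nmd := by
  ext p
  constructor
  · rintro (⟨α, h1, hα, h2, hcf, γ, hγ, hag, hgb⟩ | ⟨h1, h2, hI⟩)
    · exact Or.inl ⟨α, h1, hα, h2, (F.ck_conflictFree_iff _).mp hcf, γ, hγ,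
        ((F.ck_att_iff _ _).mp hag).1, ((F.ck_att_iff _ _).mp hgb).1⟩
    · exact Or.inr ⟨h1, h2, (F.ck_initial_iff _).mp hI⟩
  · rintro (⟨α, h1, hα, h2, hcf, γ, hγ, hag, hgb⟩ | ⟨h1, h2, hI⟩)
    · have hnα : ¬ F.att α α := hcf.2 α (by simp) α (by simp)
      have hn2 : ¬ F.att p.2 p.2 := hcf.2 p.2 (by simp) p.2 (by simp)
      exact Or.inl ⟨α, h1, hα, h2, (F.ck_conflictFree_iff _).mpr hcf, γ, hγ,
        F.ck_att_of_source hag hnα, F.ck_att_of_target hgb hn2⟩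
    · exact Or.inr ⟨h1, h2, (F.ck_initial_iff _).mpr hI⟩

lemma ck_complete_iff (E : Set A) : F.ck.Complete E ↔ F.Complete E := by
  constructor
  · rintro ⟨⟨hcf, hdef⟩, hcomp⟩
    have hcfF := (F.ck_conflictFree_iff E).mp hcf
    refine ⟨⟨hcfF, ?_⟩, ?_⟩
    · intro a ha b hba
      have hna : ¬ F.att a a := hcfF.2 a ha a ha
      obtain ⟨c, hcE, hcb⟩ := hdef a ha b (F.ck_att_of_target hba hna)
      exact ⟨c, hcE, ((F.ck_att_iff c b).mp hcb).1⟩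
    · intro a haAR hd
      apply hcomp a haAR
      intro b hba
      obtain ⟨c, hcE, hcb⟩ := hd b ((F.ck_att_iff b a).mp hba).1
      exact ⟨c, hcE, F.ck_att_of_source hcb (hcfF.2 c hcE c hcE)⟩
  · rintro ⟨⟨hcf, hdef⟩, hcomp⟩
    have hcfk := (F.ck_conflictFree_iff E).mpr hcf
    refine ⟨⟨hcfk, ?_⟩, ?_⟩
    · intro a ha b hba
      obtain ⟨c, hcE, hcb⟩ := hdef a ha b ((F.ck_att_iff b a).mp hba).1
      exact ⟨c, hcE, F.ck_att_of_source hcb (hcf.2 c hcE c hcE)⟩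
    · intro a haAR hd
      by_cases hsa : F.att a a
      · obtain ⟨c, hcE, hca⟩ := hd a ((F.ck_att_self_iff a).mpr hsa)
        obtain ⟨d, hdE, hdc⟩ := hd c hca
        exact absurd ((F.ck_att_iff d c).mp hdc).1 (hcf.2 d hdE c hcE)
      · apply hcomp a haAR
        intro b hba
        obtain ⟨c, hcE, hcb⟩ := hd b (F.ck_att_of_target hba hsa)
        exact ⟨c, hcE, ((F.ck_att_iff c b).mp hcb).1⟩

lemma ck_dE (E : Set A) : F.ck.dE E = F.dE E := by
  unfold dE
  rw [ck_nmd]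

end AF

/-- Lemma 2: `CO(DG(F)) = CO(DG(F^ck))`. -/
theorem statement13 {A : Type*} (F : AF A) :
    F.CO = F.ck.CO := by
  ext D
  constructor
  · intro hD
    obtain ⟨E, hE, rfl⟩ := F.CO_eq_dE hD
    have hE' : F.ck.Complete E := (F.ck_complete_iff E).mpr hE
    have h2 := F.ck.dE_mem_CO hE'
    rwa [F.ck_dE] at h2
  · intro hD
    obtain ⟨E, hE, rfl⟩ := F.ck.CO_eq_dE hD
    rw [F.ck_dE]
    exact F.dE_mem_CO ((F.ck_complete_iff E).mp hE)
end
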